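/- arXiv:1904.00366 — 3 statements merged into one kernel-verified Lean document; each statement's English description precedes it below -/
import Mathlib

section
/- Let X be a compact metric space and f : X → X continuous. If (x, y) is a Li-Yorke pair for f, then there exists (z, w) ∈ ω((x,y), f × f) with z ≠ w, (z, w) ∈ CR(f)², and z ~ w (chain relation). -/
open Metric Filter Set
open scoped Classical

section Defs

variable {X : Type*} [MetricSpace X]

/-- `(c i)_{i=0}^k` is a δ-chain of `f`. -/
def IsChain' (f : X → X) (δ : ℝ) (c : ℕ → X) (k : ℕ) : Prop :=
  ∀ i < k, dist (f (c i)) (c (i + 1)) ≤ δ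

/-- The chain recurrent set of `f`. -/
def CR (f : X → X) : Set X :=
  {x | ∀ δ > 0, ∃ k > 0, ∃ c : ℕ → X, IsChain' f δ c k ∧ c 0 = x ∧ c k = x}

/-- The chain relation `~` on `CR f`. -/
def ChainRel (f : X → X) (x y : X) : Prop :=
  ∀ δ > 0, ∃ m > 0, ∃ N > 0, ∀ n ≥ N,
    (∃ c : ℕ → X, IsChain' f δ c (m * n) ∧ (∀ i ≤ m * n, c i ∈ CR f) ∧
      c 0 = x ∧ c (m * n) = y) ∧
    (∃ c : ℕ → X, IsChain' f δ c (m * n) ∧ (∀ i ≤ m * n, c i ∈ CR f) ∧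
      c 0 = y ∧ c (m * n) = x)

/-- Property* for a pair `(z, w)`, with cycles lying in `CR f`. -/
def PropertyStar (f : X → X) (z w : X) : Prop :=
  ∃ r > 0, ∀ δ > 0, ∃ k > 0, ∃ c c' : ℕ → X,
    IsChain' f δ c k ∧ IsChain' f δ c' k ∧
    (∀ i ≤ k, c i ∈ CR f) ∧ (∀ i ≤ k, c' i ∈ CR f) ∧
    c 0 = z ∧ c k = z ∧ c' 0 = w ∧ c' k = w ∧
    ∀ i ≤ k, dist (c i) (c' i) > r

/-- Property* for a pair `(z, w)` (cycles not required to lie in `CR f`). -/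
def PropertyStar' (f : X → X) (z w : X) : Prop :=
  ∃ r > 0, ∀ δ > 0, ∃ k > 0, ∃ c c' : ℕ → X,
    IsChain' f δ c k ∧ IsChain' f δ c' k ∧
    c 0 = z ∧ c k = z ∧ c' 0 = w ∧ c' k = w ∧
    ∀ i ≤ k, dist (c i) (c' i) > r

/-- Omega-limit set of the point `(x, y)` under `f × f`. -/
def OmegaLimit2 (f : X → X) (x y : X) : Set (X × X) :=
  {p | ∃ φ : ℕ → ℕ, StrictMono φ ∧
    Tendsto (fun n => (f^[φ n] x, f^[φ n] y)) atTop (nhds p)}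

/-- Omega-limit set of a point under `f`. -/
def OmegaLimit1 (f : X → X) (x : X) : Set X :=
  {p | ∃ φ : ℕ → ℕ, StrictMono φ ∧ Tendsto (fun n => f^[φ n] x) atTop (nhds p)}

/-- `(x, y)` is a DC1-pair for `f`. -/
def DC1Pair (f : X → X) (x y : X) : Prop :=
  (∀ δ > 0, Filter.limsup (fun n : ℕ =>
      (((Finset.range n).filter fun i => dist (f^[i] x) (f^[i] y) < δ).card : ℝ) / n)
      Filter.atTop = 1) ∧
  (∃ δ₀ > 0, Filter.limsup (fun n : ℕ =>
      (((Finset.range n).filter fun i => dist (f^[i] x) (f^[i] y) > δ₀).card : ℝ) / n)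
      Filter.atTop = 1)

/-- `f` exhibits distributional chaos of type 1. -/
def ExhibitsDC1 (f : X → X) : Prop :=
  ∃ S : Set X, ¬ S.Countable ∧ ∀ x ∈ S, ∀ y ∈ S, x ≠ y → DC1Pair f x y

/-- `(x, y)` is a Li-Yorke pair for `f`. -/
def LiYorkePair (f : X → X) (x y : X) : Prop :=
  Filter.liminf (fun n => dist (f^[n] x) (f^[n] y)) Filter.atTop = 0 ∧
  Filter.limsup (fun n => dist (f^[n] x) (f^[n] y)) Filter.atTop > 0

/-- `(x, y)` is a proximal pair for `f`. -/
def ProximalPair (f : X → X) (x y : X) : Prop :=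
  Filter.liminf (fun n => dist (f^[n] x) (f^[n] y)) Filter.atTop = 0

/-- `(x, y)` is a distal pair for `f`. -/
def DistalPair (f : X → X) (x y : X) : Prop :=
  0 < ⨅ n : ℕ, dist (f^[n] x) (f^[n] y)

/-- `f` has the limit shadowing property. -/
def LimitShadowing (f : X → X) : Prop :=
  ∀ x : ℕ → X, Tendsto (fun i => dist (f (x i)) (x (i + 1))) atTop (nhds 0) →
    ∃ p : X, Tendsto (fun i => dist (f^[i] p) (x i)) atTop (nhds 0)

/-- The restriction of `f` to `CR f` has the shadowing property. -/
def ShadowingOnCR (f : X → X) : Prop :=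
  ∀ ε > 0, ∃ δ > 0, ∀ x : ℕ → X, (∀ i, x i ∈ CR f) →
    (∀ i, dist (f (x i)) (x (i + 1)) ≤ δ) →
    ∃ p ∈ CR f, ∀ i, dist (f^[i] p) (x i) ≤ ε

/-- Topological entropy of `f` relative to the cover `U`. -/
noncomputable def entropyOfCover (f : X → X) {ι : Type*} (U : ι → Set X) : ℝ :=
  Filter.limsup (fun n : ℕ =>
    Real.log ((sInf {m : ℕ | ∃ s : Finset (Fin n → ι), s.card = m ∧
      (⋃ g ∈ s, ⋂ i : Fin n, f^[(i : ℕ)] ⁻¹' U (g i)) = Set.univ} : ℕ) : ℝ) / n)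
    Filter.atTop

/-- `(x, y)` is an entropy pair for `f`. -/
def EntropyPair (f : X → X) (x y : X) : Prop :=
  x ≠ y ∧ ∀ A B : Set X, IsClosed A → IsClosed B → x ∈ interior A → y ∈ interior B →
    Disjoint A B → 0 < entropyOfCover f (fun b : Bool => if b then Aᶜ else Bᶜ)

end Defs


/-!
The ω-limit set `Ω` of `(x, y)` under `f × f` is internally chain transitive: the orbit eventually
stays close to `Ω`, so points of `Ω` shadowing a long orbit segment form a chain inside `Ω` between
any two of its points. Hence points of `Ω` (and their coordinates) are chain recurrent, and any two
points of `Ω` lie on a common `δ`-cycle in `Ω`. As the limsup of `dist (fⁿ x) (fⁿ y)` is positive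
and its liminf is zero, `Ω` contains an off-diagonal point `p` and a diagonal point `q`. Going `n`
times around a cycle through `p` and `q`, following the first coordinate until the first visit of
`q` and the second coordinate afterwards, gives a chain of `f` from `p.1` to `p.2` of length `m n`;
swapping the coordinates gives the way back.
-/

open Topology omegaLimit

namespace IsChain'

variable {X : Type*} [MetricSpace X] {f : X → X} {δ : ℝ} {c d : ℕ → X} {k l : ℕ}

theorem fst {Y : Type*} [MetricSpace Y] {g : Y → Y} {c : ℕ → X × Y}
    (hc : IsChain' (Prod.map f g) δ c k) : IsChain' f δ (fun i => (c i).1) k :=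
  fun i hi => (le_max_left _ _).trans (hc i hi)

theorem snd {Y : Type*} [MetricSpace Y] {g : Y → Y} {c : ℕ → X × Y}
    (hc : IsChain' (Prod.map f g) δ c k) : IsChain' g δ (fun i => (c i).2) k :=
  fun i hi => (le_max_right _ _).trans (hc i hi)

theorem append (hc : IsChain' f δ c k) (hd : IsChain' f δ d l) (hcd : c k = d 0) :
    IsChain' f δ (fun i => if i ≤ k then c i else d (i - k)) (k + l) := by
  intro i hi
  dsimp only
  rcases lt_trichotomy i k with hik | rfl | hki
  · rw [if_pos hik.le, if_pos (show i + 1 ≤ k by omega)]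
    exact hc i hik
  · rw [if_pos le_rfl, if_neg (by omega), Nat.add_sub_cancel_left, hcd]
    simpa using hd 0 (by omega)
  · rw [if_neg hki.not_ge, if_neg (by omega), Nat.sub_add_comm hki.le]
    exact hd _ (by omega)

theorem splice {A : ℕ} (hc : IsChain' f δ c k) (hd : IsChain' f δ d k) (hA : c A = d A) :
    IsChain' f δ (fun i => if i ≤ A then c i else d i) k := by
  intro i hi
  dsimp only
  rcases lt_trichotomy i A with hiA | rfl | hAi
  · rw [if_pos hiA.le, if_pos (show i + 1 ≤ A by omega)]
    exact hc i hi
  · rw [if_pos le_rfl, if_neg (by omega), hA]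
    exact hd i hi
  · rw [if_neg hAi.not_ge, if_neg (by omega)]
    exact hd i hi

theorem mod (hc : IsChain' f δ c k) (hk : 0 < k) (hcycle : c k = c 0) (n : ℕ) :
    IsChain' f δ (fun i => c (i % k)) n := by
  intro i _
  have hik : i % k < k := Nat.mod_lt i hk
  have hsucc : i + 1 = (i % k + 1) + k * (i / k) := by
    have := Nat.mod_add_div i k
    omega
  dsimp only
  rw [hsucc, Nat.add_mul_mod_self_left]
  rcases Nat.lt_or_ge (i % k + 1) k with hlt | hge
  · rw [Nat.mod_eq_of_lt hlt]
    exact hc _ hik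
  · have hwrap : i % k + 1 = k := by omega
    have hstep := hc _ hik
    rw [hwrap] at hstep
    rwa [hwrap, Nat.mod_self, ← hcycle]

end IsChain'

section ChainRecurrence

variable {X Y : Type*} [MetricSpace X] [MetricSpace Y] {f : X → X} {g : Y → Y}

theorem fst_mem_CR {p : X × Y} (hp : p ∈ CR (Prod.map f g)) : p.1 ∈ CR f := by
  intro δ hδ
  obtain ⟨k, hk, c, hc, hc0, hck⟩ := hp δ hδ
  exact ⟨k, hk, fun i => (c i).1, hc.fst, congrArg Prod.fst hc0, congrArg Prod.fst hck⟩

theorem snd_mem_CR {p : X × Y} (hp : p ∈ CR (Prod.map f g)) : p.2 ∈ CR g := by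
  intro δ hδ
  obtain ⟨k, hk, c, hc, hc0, hck⟩ := hp δ hδ
  exact ⟨k, hk, fun i => (c i).2, hc.snd, congrArg Prod.snd hc0, congrArg Prod.snd hck⟩

theorem exists_pos_isChain'_of_dist_iterate_lt (hg : UniformContinuous g) {δ : ℝ} (hδ : 0 < δ) :
    ∃ η > 0, ∀ (w : Y) (c : ℕ → Y) (L : ℕ),
      (∀ i ≤ L, dist (c i) (g^[i] w) < η) → IsChain' g δ c L := by
  obtain ⟨η₀, hη₀, hgη₀⟩ := Metric.uniformContinuous_iff.1 hg (δ / 2) (by positivity)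
  refine ⟨min η₀ (δ / 2), by positivity, fun w c L hc i hi => ?_⟩
  have hnow := hc i hi.le
  have hnext := hc (i + 1) hi
  rw [Function.iterate_succ_apply'] at hnext
  calc dist (g (c i)) (c (i + 1))
      ≤ dist (g (c i)) (g (g^[i] w)) + dist (c (i + 1)) (g (g^[i] w)) :=
        dist_triangle_right _ _ _
    _ ≤ δ / 2 + δ / 2 := by
        gcongr
        · exact (hgη₀ (hnow.trans_le (min_le_left _ _))).le
        · exact (hnext.trans_le (min_le_right _ _)).le
    _ = δ := add_halves δ

end ChainRecurrence

section OmegaLimit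

variable {Y : Type*} [MetricSpace Y] [CompactSpace Y] {g : Y → Y} {z a b : Y}

/-- The ω-limit set of an orbit is internally chain transitive. -/
theorem exists_isChain'_of_mem_omegaLimit (hg : Continuous g)
    (ha : a ∈ ω⁺ (g^[·]) {z}) (hb : b ∈ ω⁺ (g^[·]) {z}) {δ : ℝ} (hδ : 0 < δ) :
    ∃ L > 0, ∃ c : ℕ → Y, IsChain' g δ c L ∧ (∀ i ≤ L, c i ∈ ω⁺ (g^[·]) {z}) ∧
      c 0 = a ∧ c L = b := by
  obtain ⟨η, hη, hchain⟩ :=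
    exists_pos_isChain'_of_dist_iterate_lt (CompactSpace.uniformContinuous_of_continuous hg) hδ
  have hnear : ∀ᶠ n in atTop, g^[n] z ∈ thickening η (ω⁺ (g^[·]) {z}) := by
    simpa only [mapsTo_singleton] using eventually_mapsTo_of_isOpen_of_omegaLimit_subset atTop
      (g^[·]) {z} isOpen_thickening (self_subset_thickening hη _)
  obtain ⟨N, hN⟩ := eventually_atTop.1 hnear
  have hvisits {p : Y} (hp : p ∈ ω⁺ (g^[·]) {z}) (M : ℕ) : ∃ n ≥ M, dist (g^[n] z) p < η :=
    frequently_atTop.1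
      (((mem_omegaLimit_singleton_iff_mapClusterPt _ _ _ _).1 hp).frequently (ball_mem_nhds p hη)) M
  obtain ⟨n₁, hn₁N, hn₁a⟩ := hvisits ha N
  obtain ⟨n₂, hn₂, hn₂b⟩ := hvisits hb (n₁ + 1)
  have hshadow (i : ℕ) : ∃ p ∈ ω⁺ (g^[·]) {z}, dist p (g^[i] (g^[n₁] z)) < η := by
    obtain ⟨p, hp, hdist⟩ := mem_thickening_iff.1 (hN (i + n₁) (by omega))
    exact ⟨p, hp, by rwa [dist_comm, ← Function.iterate_add_apply]⟩
  choose P hPΩ hPdist using hshadow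
  set L := n₂ - n₁
  set c := Function.update (Function.update P 0 a) L b
  have hc (i : ℕ) (hi : i ≤ L) :
      c i ∈ ω⁺ (g^[·]) {z} ∧ dist (c i) (g^[i] (g^[n₁] z)) < η := by
    simp only [c, Function.update_apply]
    split_ifs with hiL hi0
    · rw [hiL, ← Function.iterate_add_apply, Nat.sub_add_cancel (by omega), dist_comm]
      exact ⟨hb, hn₂b⟩
    · rw [hi0, Function.iterate_zero_apply, dist_comm]
      exact ⟨ha, hn₁a⟩
    · exact ⟨hPΩ i, hPdist i⟩
  refine ⟨L, by omega, c, hchain _ c L fun i hi => (hc i hi).2, fun i hi => (hc i hi).1, ?_, ?_⟩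
  · simp [c, show (0 : ℕ) ≠ L by omega]
  · simp [c]

theorem omegaLimit_subset_CR (hg : Continuous g) : ω⁺ (g^[·]) {z} ⊆ CR g := by
  intro a ha δ hδ
  obtain ⟨L, hL, c, hc, -, hc0, hcL⟩ := exists_isChain'_of_mem_omegaLimit hg ha ha hδ
  exact ⟨L, hL, c, hc, hc0, hcL⟩

theorem exists_cycle_of_mem_omegaLimit (hg : Continuous g)
    (ha : a ∈ ω⁺ (g^[·]) {z}) (hb : b ∈ ω⁺ (g^[·]) {z}) {δ : ℝ} (hδ : 0 < δ) :
    ∃ m, ∃ A < m, ∃ D : ℕ → Y, IsChain' g δ D m ∧ (∀ i ≤ m, D i ∈ ω⁺ (g^[·]) {z}) ∧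
      D 0 = a ∧ D A = b ∧ D m = a := by
  obtain ⟨A, hA, c, hc, hcΩ, hc0, hcA⟩ := exists_isChain'_of_mem_omegaLimit hg ha hb hδ
  obtain ⟨B, hB, d, hd, hdΩ, hd0, hdB⟩ := exists_isChain'_of_mem_omegaLimit hg hb ha hδ
  refine ⟨A + B, A, by omega, _, hc.append hd (hcA.trans hd0.symm), fun i hi => ?_, ?_, ?_, ?_⟩
  · split_ifs with hiA
    · exact hcΩ i hiA
    · exact hdΩ _ (by omega)
  · simp [hc0]
  · simp [hcA]
  · simp [show ¬ A + B ≤ A by omega, hdB]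

end OmegaLimit

theorem exists_mapClusterPt_apply_eq {Y Z : Type*} [TopologicalSpace Y] [SeqCompactSpace Y]
    [TopologicalSpace Z] [FirstCountableTopology Z] [T2Space Z] {u : ℕ → Y} {h : Y → Z}
    (hh : Continuous h) {c : Z} (hc : MapClusterPt c atTop (h ∘ u)) :
    ∃ p, MapClusterPt p atTop u ∧ h p = c := by
  obtain ⟨φ, hφ, hφc⟩ := hc.tendsto_subseq
  obtain ⟨p, ψ, hψ, hp⟩ := SeqCompactSpace.tendsto_subseq (u ∘ φ)
  refine ⟨p, hp.mapClusterPt.of_comp (hφ.comp hψ).tendsto_atTop, ?_⟩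
  exact tendsto_nhds_unique ((hh.tendsto p).comp hp) (hφc.comp hψ.tendsto_atTop)

section Product

variable {X : Type*} [MetricSpace X] {f : X → X}

theorem omegaLimit2_eq_omegaLimit (x y : X) :
    OmegaLimit2 f x y = ω⁺ ((Prod.map f f)^[·]) {(x, y)} := by
  ext p
  simp only [mem_omegaLimit_singleton_iff_mapClusterPt, Prod.map_iterate, Prod.map_apply]
  exact ⟨fun ⟨φ, hφ, hp⟩ => hp.mapClusterPt.of_comp hφ.tendsto_atTop,
    fun hp => hp.tendsto_subseq⟩

theorem exists_isChain'_of_meet {δ : ℝ} {c d : ℕ → X} {K A : ℕ} (hc : IsChain' f δ c K)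
    (hd : IsChain' f δ d K) (hcCR : ∀ i, c i ∈ CR f) (hdCR : ∀ i, d i ∈ CR f) (hA : c A = d A)
    (hAK : A < K) :
    ∃ e : ℕ → X, IsChain' f δ e K ∧ (∀ i ≤ K, e i ∈ CR f) ∧ e 0 = c 0 ∧ e K = d K := by
  refine ⟨_, hc.splice hd hA, fun i _ => ?_, by simp, by simp [hAK.not_ge]⟩
  split_ifs
  exacts [hcCR i, hdCR i]

theorem chainRel_of_forall_cycle {p : X × X}
    (h : ∀ δ > 0, ∃ m, ∃ A < m, ∃ D : ℕ → X × X, IsChain' (Prod.map f f) δ D m ∧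
      (∀ i ≤ m, D i ∈ CR (Prod.map f f)) ∧ D 0 = p ∧ D m = p ∧ (D A).1 = (D A).2) :
    ChainRel f p.1 p.2 := by
  intro δ hδ
  obtain ⟨m, A, hAm, D, hD, hDCR, hD0, hDm, hDA⟩ := h δ hδ
  refine ⟨m, by omega, 1, one_pos, fun n hn => ?_⟩
  -- run around the cycle `n` times; the diagonal point `D A` lets us switch coordinates
  set E : ℕ → X × X := fun i => D (i % m)
  have hE : IsChain' (Prod.map f f) δ E (m * n) := hD.mod (by omega) (hDm.trans hD0.symm) _
  have hECR (i : ℕ) : E i ∈ CR (Prod.map f f) := hDCR _ (Nat.mod_lt _ (by omega)).le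
  have hE0 : E 0 = p := by simp [E, hD0]
  have hEend : E (m * n) = p := by simp [E, hD0]
  have hEA : (E A).1 = (E A).2 := by simpa [E, Nat.mod_eq_of_lt hAm] using hDA
  have hAmn : A < m * n := lt_of_lt_of_le hAm (Nat.le_mul_of_pos_right m hn)
  constructor
  · simpa [hE0, hEend] using exists_isChain'_of_meet hE.fst hE.snd (fun i => fst_mem_CR (hECR i))
      (fun i => snd_mem_CR (hECR i)) hEA hAmn
  · simpa [hE0, hEend] using exists_isChain'_of_meet hE.snd hE.fst (fun i => snd_mem_CR (hECR i))
      (fun i => fst_mem_CR (hECR i)) hEA.symm hAmn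

end Product

/-- a Li-Yorke pair yields a non-diagonal chain related pair
in the omega-limit set. -/
theorem liYorke_yields_chainRel_pair {X : Type*} [MetricSpace X] [CompactSpace X]
    (f : X → X) (hf : Continuous f) (x y : X) (h : LiYorkePair f x y) :
    ∃ p ∈ OmegaLimit2 f x y, p.1 ≠ p.2 ∧ p.1 ∈ CR f ∧ p.2 ∈ CR f ∧
      ChainRel f p.1 p.2 := by
  obtain ⟨hliminf, hlimsup⟩ := h
  set F := Prod.map f f
  have hF : Continuous F := hf.prodMap hf
  set u : ℕ → X × X := fun n => F^[n] (x, y)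
  have horbit : (fun n => dist (f^[n] x) (f^[n] y)) = (fun p : X × X => dist p.1 p.2) ∘ u := by
    ext n
    simp [u, F]
  rw [horbit] at hliminf hlimsup
  have hcont : Continuous fun p : X × X => dist p.1 p.2 := continuous_fst.dist continuous_snd
  have hbdd_above : IsBoundedUnder (· ≤ ·) atTop ((fun p : X × X => dist p.1 p.2) ∘ u) :=
    isBoundedUnder_of ⟨diam (univ : Set X), fun n =>
      dist_le_diam_of_mem isCompact_univ.isBounded (mem_univ _) (mem_univ _)⟩
  have hbdd_below : IsBoundedUnder (· ≥ ·) atTop ((fun p : X × X => dist p.1 p.2) ∘ u) :=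
    isBoundedUnder_of ⟨0, fun n => dist_nonneg⟩
  obtain ⟨p, hpΩ, hp⟩ := exists_mapClusterPt_apply_eq hcont
    (MapClusterPt.limsup hbdd_below.isCoboundedUnder_le hbdd_above)
  obtain ⟨q, hqΩ, hq⟩ := exists_mapClusterPt_apply_eq hcont
    (MapClusterPt.liminf hbdd_above.isCoboundedUnder_ge hbdd_below)
  rw [← mem_omegaLimit_singleton_iff_mapClusterPt] at hpΩ hqΩ
  have hCR := omegaLimit_subset_CR hF (z := (x, y))
  refine ⟨p, (omegaLimit2_eq_omegaLimit x y).symm ▸ hpΩ, dist_pos.1 (hp ▸ hlimsup),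
    fst_mem_CR (hCR hpΩ), snd_mem_CR (hCR hpΩ), chainRel_of_forall_cycle fun δ hδ => ?_⟩
  obtain ⟨m, A, hAm, D, hD, hDΩ, hD0, hDA, hDm⟩ := exists_cycle_of_mem_omegaLimit hF hpΩ hqΩ hδ
  exact ⟨m, A, hAm, D, hD, fun i hi => hCR (hDΩ i hi), hD0, hDm,
    hDA ▸ dist_eq_zero.1 (hq.trans hliminf)⟩
end

section
/- Let X be a compact metric space and f : X → X continuous. If (x, y) is a DC1-pair for f, then there exists (z, w) ∈ ω((x,y), f × f) ⊆ CR(f)² with z ~ w and property* (there is r > 0 such that for every δ > 0 there exist equal-length δ-cycles in CR(f) through z and through w staying at distance greater than r at each step). -/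
open Metric Filter Set
open scoped Classical

/-!
A pair that is `δ₀`-apart on a set of times of upper density one is `δ₀`-apart on arbitrarily
long runs of consecutive times, so a limit point `p₀` of the starts of these runs is a pair in
`ω((x, y))` whose whole forward orbit stays `δ₀`-apart. Take `(z, w)` in the ω-limit set of
`p₀`; it lies in `ω((x, y))`.

Points of ω-limit sets are chain recurrent. A `δ`-chain in `CR f` is obtained by following an
orbit between two visits close to its endpoints and moving every point by less than `ε` into
`CR f`; uniform continuity absorbs these errors. Following the orbit of `p₀` gives the two
separated cycles of property*. Following the orbit of `(x, y)` and jumping from the orbit of `x`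
to that of `y` at a time when they are close (such times exist since the pair is proximal) gives
chains `z → z`, `z → w`, `w → w`, `w → z` of a common length, whose concatenations give `z ~ w`.
-/

section Density

open Finset

noncomputable def upperDensity (P : ℕ → Prop) [DecidablePred P] : ℝ :=
  limsup (fun n : ℕ => ((#{i ∈ range n | P i} : ℕ) : ℝ) / n) atTop

variable {P : ℕ → Prop} [DecidablePred P]

lemma card_filter_range_le_of_forall_exists_not {L M : ℕ} (h : ∀ a ≥ M, ∃ j ≤ L, ¬P (a + j))
    (n : ℕ) : (L + 1) * #{i ∈ range n | P i} ≤ L * n + (L + 1) * (M + L) := by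
  have hblock : ∀ b, #{i ∈ range (M + b * (L + 1)) | P i} ≤ M + b * L := by
    intro b
    induction b with
    | zero => simpa using card_filter_le (range M) P
    | succ b ih =>
      obtain ⟨j, hjL, hj⟩ := h (M + b * (L + 1)) (by omega)
      have hrun : ∑ i ∈ range (L + 1), (if P (M + b * (L + 1) + i) then 1 else 0) < L + 1 := by
        calc ∑ i ∈ range (L + 1), (if P (M + b * (L + 1) + i) then 1 else 0)
            < ∑ _i ∈ range (L + 1), 1 :=
              sum_lt_sum (fun i _ => by split_ifs <;> simp)
                ⟨j, mem_range.2 (by omega), by simp [hj]⟩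
          _ = L + 1 := by simp
      rw [card_filter] at ih ⊢
      rw [show M + (b + 1) * (L + 1) = M + b * (L + 1) + (L + 1) by ring, sum_range_add]
      nlinarith
  have hn : n ≤ M + (n / (L + 1) + 1) * (L + 1) := by
    have := Nat.lt_div_mul_add (a := n) (Nat.succ_pos L)
    nlinarith
  have hmono := (Finset.card_le_card (filter_subset_filter P (range_subset_range.2 hn))).trans
    (hblock (n / (L + 1) + 1))
  have hdiv : n / (L + 1) * (L + 1) ≤ n := Nat.div_mul_le_self n (L + 1)
  nlinarith

lemma upperDensity_le_of_eventually_le {c : ℝ}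
    (h : ∀ᶠ n : ℕ in atTop, ((#{i ∈ range n | P i} : ℕ) : ℝ) / n ≤ c) : upperDensity P ≤ c :=
  limsup_le_of_le (isBoundedUnder_of ⟨0, fun n => by positivity⟩).isCoboundedUnder_le h

lemma exists_run_of_upperDensity_eq_one (h : upperDensity P = 1) (L M : ℕ) :
    ∃ a ≥ M, ∀ j ≤ L, P (a + j) := by
  by_contra! hno
  have hle : upperDensity P ≤ (2 * L + 1) / (2 * L + 2) := by
    refine upperDensity_le_of_eventually_le ?_
    filter_upwards [eventually_ge_atTop (2 * (L + 1) * (M + L) + 1)] with n hn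
    have hcount : ((L + 1) * #{i ∈ range n | P i} : ℝ) ≤ L * n + (L + 1) * (M + L) := by
      exact_mod_cast card_filter_range_le_of_forall_exists_not hno n
    have hn' : (2 * (L + 1) * (M + L) + 1 : ℝ) ≤ n := by exact_mod_cast hn
    rw [div_le_div_iff₀ (Nat.cast_pos.2 (by omega)) (by positivity)]
    nlinarith
  rw [h, le_div_iff₀ (by positivity)] at hle
  linarith

lemma frequently_of_upperDensity_eq_one (h : upperDensity P = 1) : ∃ᶠ n in atTop, P n :=
  frequently_atTop.2 fun M => by simpa using exists_run_of_upperDensity_eq_one h 0 M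

end Density

section Chains

variable {X : Type*} [MetricSpace X] {f : X → X}

def IsChainIn (f : X → X) (S : Set X) (δ : ℝ) (a b : X) (k : ℕ) (c : ℕ → X) : Prop :=
  IsChain' f δ c k ∧ (∀ i ≤ k, c i ∈ S) ∧ c 0 = a ∧ c k = b

lemma IsChain'.mono {δ δ' : ℝ} {c : ℕ → X} {k : ℕ} (h : IsChain' f δ c k) (hδ : δ ≤ δ') :
    IsChain' f δ' c k :=
  fun i hi => (h i hi).trans hδ

lemma IsChain'.of_dist_lt {η ε ε' : ℝ} (huc : ∀ a b, dist a b < ε → dist (f a) (f b) ≤ η)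
    {c c' : ℕ → X} {k : ℕ} (hc : IsChain' f ε' c k) (hcc' : ∀ i ≤ k, dist (c i) (c' i) < ε) :
    IsChain' f (η + ε' + ε) c' k := by
  intro i hi
  calc dist (f (c' i)) (c' (i + 1))
      ≤ dist (f (c' i)) (f (c i)) + dist (f (c i)) (c (i + 1)) + dist (c (i + 1)) (c' (i + 1)) :=
        dist_triangle4 _ _ _ _
    _ ≤ η + ε' + ε := by
        gcongr
        · exact huc _ _ (by rw [dist_comm]; exact hcc' i hi.le)
        · exact hc i hi
        · exact (hcc' _ hi).le

lemma isChain'_iterate {δ : ℝ} (hδ : 0 ≤ δ) (p : X) (s k : ℕ) :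
    IsChain' f δ (fun i => f^[s + i] p) k := by
  intro i _
  dsimp only
  rw [← add_assoc, ← Function.iterate_succ_apply' f, dist_self]
  exact hδ

lemma isChain'_switch {δ : ℝ} {p q : X} {t : ℕ}
    (hpq : dist (f^[t] p) (f^[t] q) ≤ δ) (s k : ℕ) :
    IsChain' f δ (fun i => if s + i < t then f^[s + i] p else f^[s + i] q) k := by
  intro i _
  dsimp only
  rw [← add_assoc]
  split_ifs with h₁ h₂ h₂
  · rw [← Function.iterate_succ_apply' f, dist_self]; exact dist_nonneg.trans hpq
  · rwa [← Function.iterate_succ_apply' f, Nat.succ_eq_add_one, show s + i + 1 = t by omega]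
  · omega
  · rw [← Function.iterate_succ_apply' f, dist_self]; exact dist_nonneg.trans hpq

lemma IsChainIn.append {S : Set X} {δ : ℝ} {a b d : X} {k l : ℕ} {c e : ℕ → X}
    (hc : IsChainIn f S δ a b k c) (he : IsChainIn f S δ b d l e) :
    IsChainIn f S δ a d (k + l) (fun i => if i < k then c i else e (i - k)) := by
  obtain ⟨hc, hcS, hc0, hck⟩ := hc
  obtain ⟨he, heS, he0, hel⟩ := he
  refine ⟨fun i hi => ?_, fun i hi => ?_, ?_, by simpa using hel⟩ <;> dsimp only
  · split_ifs with h₁ h₂ h₂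
    · exact hc i h₁
    · rw [show i + 1 - k = 0 by omega, he0, ← hck, show k = i + 1 by omega]
      exact hc i h₁
    · omega
    · rw [show i + 1 - k = i - k + 1 by omega]
      exact he _ (by omega)
  · split_ifs with h
    · exact hcS i h.le
    · exact heS _ (by omega)
  · split_ifs with h
    · exact hc0
    · obtain rfl : k = 0 := by omega
      rw [Nat.sub_self, he0, ← hck, hc0]

lemma IsChainIn.exists_mul {S : Set X} {δ : ℝ} {a b : X} {m : ℕ} {c e : ℕ → X}
    (hc : IsChainIn f S δ a a m c) (he : IsChainIn f S δ a b m e) (n : ℕ) :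
    ∃ c', IsChainIn f S δ a b (m * (n + 1)) c' := by
  induction n with
  | zero => exact ⟨e, by simpa using he⟩
  | succ n ih =>
    obtain ⟨c', hc'⟩ := ih
    rw [show m * (n + 1 + 1) = m + m * (n + 1) by ring]
    exact ⟨_, hc.append hc'⟩

lemma chainRel_of_forall_exists {z w : X}
    (h : ∀ δ > 0, ∃ m > 0, (∃ c, IsChainIn f (CR f) δ z z m c) ∧
      (∃ c, IsChainIn f (CR f) δ z w m c) ∧ (∃ c, IsChainIn f (CR f) δ w w m c) ∧
      (∃ c, IsChainIn f (CR f) δ w z m c)) :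
    ChainRel f z w := by
  intro δ hδ
  obtain ⟨m, hm, ⟨_, hzz⟩, ⟨_, hzw⟩, ⟨_, hww⟩, ⟨_, hwz⟩⟩ := h δ hδ
  refine ⟨m, hm, 1, one_pos, fun n hn => ?_⟩
  obtain ⟨n, rfl⟩ := Nat.exists_eq_add_of_le' hn
  exact ⟨hzz.exists_mul hzw n, hww.exists_mul hwz n⟩

lemma exists_isChainIn_near {S : Set X} {δ ε : ℝ} (hεδ : ε ≤ δ / 3)
    (huc : ∀ a b, dist a b < ε → dist (f a) (f b) ≤ δ / 3) {o : ℕ → X} {k : ℕ} (hk : 0 < k)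
    (ho : IsChain' f ε o k) (hoS : ∀ i ≤ k, o i ∈ thickening ε S) {a b : X}
    (ha : a ∈ S) (hb : b ∈ S) (hoa : dist (o 0) a < ε) (hob : dist (o k) b < ε) :
    ∃ c, IsChainIn f S δ a b k c ∧ ∀ i ≤ k, dist (o i) (c i) < ε := by
  have : Nonempty X := ⟨a⟩
  simp only [mem_thickening_iff] at hoS
  choose! v hvS hv using hoS
  set c := Function.update (Function.update v 0 a) k b
  have hc : ∀ i ≤ k, c i ∈ S ∧ dist (o i) (c i) < ε := by
    intro i hi
    simp only [c, Function.update_apply]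
    split_ifs with h₁ h₂
    · exact ⟨hb, h₁ ▸ hob⟩
    · exact ⟨ha, h₂ ▸ hoa⟩
    · exact ⟨hvS i hi, hv i hi⟩
  refine ⟨c, ⟨?_, fun i hi => (hc i hi).1, by simp [c, hk.ne], by simp [c]⟩,
    fun i hi => (hc i hi).2⟩
  exact (ho.of_dist_lt huc fun i hi => (hc i hi).2).mono (by linarith)

lemma exists_isChainIn_CR_switch {δ ε : ℝ} (hεδ : ε ≤ δ / 3)
    (huc : ∀ a b, dist a b < ε → dist (f a) (f b) ≤ δ / 3) {p q a b : X} {s₁ t s₂ : ℕ}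
    (hs₁ : s₁ < t) (hs₂ : t ≤ s₂) (hp : ∀ n ≥ s₁, f^[n] p ∈ thickening ε (CR f))
    (hq : ∀ n ≥ s₁, f^[n] q ∈ thickening ε (CR f)) (hpq : dist (f^[t] p) (f^[t] q) ≤ ε)
    (ha : a ∈ CR f) (hb : b ∈ CR f) (hpa : dist (f^[s₁] p) a < ε)
    (hqb : dist (f^[s₂] q) b < ε) :
    ∃ c, IsChainIn f (CR f) δ a b (s₂ - s₁) c := by
  obtain ⟨c, hc, -⟩ := exists_isChainIn_near (k := s₂ - s₁) hεδ huc (by omega)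
    (isChain'_switch hpq s₁ _)
    (fun i _ => by split_ifs <;> [exact hp _ (by omega); exact hq _ (by omega)]) ha hb
    (by simpa [hs₁] using hpa) (by simpa [Nat.add_sub_cancel' (hs₁.le.trans hs₂), not_lt.2 hs₂])
  exact ⟨c, hc⟩

end Chains

section Orbits

variable {Y : Type*} [TopologicalSpace Y] {g : Y → Y}

lemma MapClusterPt.iterate_of_orbit (hg : Continuous g) {p q : Y}
    (h : MapClusterPt p atTop fun n => g^[n] q) (j : ℕ) :
    MapClusterPt (g^[j] p) atTop fun n => g^[n] q := by
  refine MapClusterPt.of_comp (tendsto_add_atTop_nat j) ?_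
  convert h.continuousAt_comp (hg.iterate j).continuousAt using 1
  ext n
  simp [Function.iterate_add_apply, add_comm n j]

lemma MapClusterPt.of_orbit_of_orbit (hg : Continuous g) {p q z : Y}
    (hp : MapClusterPt p atTop fun n => g^[n] q) (hz : MapClusterPt z atTop fun n => g^[n] p) :
    MapClusterPt z atTop fun n => g^[n] q :=
  isClosed_setOfPred_clusterPt.mem_of_mapClusterPt hz
    (.of_forall fun j => hp.iterate_of_orbit hg j)

lemma exists_mapClusterPt_forall_iterate_mem [CompactSpace Y] (hg : Continuous g) {K : Set Y}
    (hK : IsClosed K) {q : Y} (hrun : ∀ L M : ℕ, ∃ a ≥ M, ∀ j ≤ L, g^[a + j] q ∈ K) :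
    ∃ p, (MapClusterPt p atTop fun n => g^[n] q) ∧ ∀ j, g^[j] p ∈ K := by
  choose a ha haK using fun k => hrun k k
  obtain ⟨p, -, hp⟩ := isCompact_univ.exists_mapClusterPt (f := atTop)
    (u := fun k => g^[a k] q) (by simp)
  refine ⟨p, MapClusterPt.of_comp (tendsto_atTop_mono ha tendsto_id) hp, fun j => ?_⟩
  refine hK.mem_of_mapClusterPt (hp.continuousAt_comp (hg.iterate j).continuousAt)
    ((eventually_ge_atTop j).mono fun k hk => ?_)
  simpa [← Function.iterate_add_apply, add_comm j] using haK k j hk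

end Orbits

section ChainRecurrence

variable {X : Type*} [MetricSpace X] [CompactSpace X] {f : X → X}

lemma exists_chain_scale (hf : Continuous f) {δ ρ : ℝ} (hδ : 0 < δ) (hρ : 0 < ρ) :
    ∃ ε > 0, ε ≤ ρ ∧ ε ≤ δ / 3 ∧ ∀ a b, dist a b < ε → dist (f a) (f b) ≤ δ / 3 := by
  obtain ⟨ε, hε, huc⟩ := uniformContinuous_iff.1
    (CompactSpace.uniformContinuous_of_continuous hf) (δ / 3) (by positivity)
  refine ⟨min ε (min ρ (δ / 3)), by positivity, (min_le_right _ _).trans (min_le_left _ _),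
    (min_le_right _ _).trans (min_le_right _ _), fun a b hab => (huc ?_).le⟩
  exact hab.trans_le (min_le_left _ _)

lemma MapClusterPt.exists_ge_dist_lt {Z : Type*} [PseudoMetricSpace Z] {u : ℕ → Z} {z : Z}
    (h : MapClusterPt z atTop u) {ε : ℝ} (hε : 0 < ε) (N : ℕ) : ∃ n ≥ N, dist (u n) z < ε :=
  frequently_atTop.1 (h.frequently (ball_mem_nhds z hε)) N

lemma mem_CR_of_mapClusterPt (hf : Continuous f) {p z : X}
    (h : MapClusterPt z atTop fun n => f^[n] p) : z ∈ CR f := by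
  intro δ hδ
  obtain ⟨ε, hε, -, hεδ, huc⟩ := exists_chain_scale hf hδ hδ
  obtain ⟨n₁, -, h₁⟩ := h.exists_ge_dist_lt hε 0
  obtain ⟨n₂, hn, h₂⟩ := h.exists_ge_dist_lt hε (n₁ + 1)
  obtain ⟨c, ⟨hc, -, hc0, hck⟩, -⟩ := exists_isChainIn_near (S := univ) hεδ huc
    (Nat.sub_pos_of_lt hn) (isChain'_iterate hε.le p n₁ _)
    (fun _ _ => self_subset_thickening hε _ (mem_univ _)) (mem_univ z)
    (mem_univ z) (by simpa using h₁) (by simpa [Nat.add_sub_cancel' (n₁.le_succ.trans hn)])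
  exact ⟨n₂ - n₁, Nat.sub_pos_of_lt hn, c, hc, hc0, hck⟩

lemma mem_CR_of_mapClusterPt_prod (hf : Continuous f) {x y : X} {p : X × X}
    (h : MapClusterPt p atTop fun n => (f^[n] x, f^[n] y)) : p.1 ∈ CR f ∧ p.2 ∈ CR f :=
  ⟨mem_CR_of_mapClusterPt hf (h.continuousAt_comp continuous_fst.continuousAt),
    mem_CR_of_mapClusterPt hf (h.continuousAt_comp continuous_snd.continuousAt)⟩

lemma eventually_mem_thickening_CR (hf : Continuous f) (p : X) {ε : ℝ} (hε : 0 < ε) :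
    ∀ᶠ n in atTop, f^[n] p ∈ thickening ε (CR f) :=
  (isCompact_univ.tendsto_nhdsSet_of_mapClusterPt (.of_forall fun _ => mem_univ _)
    fun _ _ hz => mem_CR_of_mapClusterPt hf hz).eventually
    (isOpen_thickening.mem_nhdsSet.2 (self_subset_thickening hε _))

end ChainRecurrence

section ChainRelation

variable {X : Type*} [MetricSpace X] [CompactSpace X] {f : X → X}

theorem chainRel_of_mapClusterPt (hf : Continuous f) {x y z w : X}
    (hprox : ∀ ε > 0, ∃ᶠ n in atTop, dist (f^[n] x) (f^[n] y) < ε)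
    (hzw : MapClusterPt (z, w) atTop fun n => (f^[n] x, f^[n] y)) : ChainRel f z w := by
  obtain ⟨hz, hw⟩ := mem_CR_of_mapClusterPt_prod hf hzw
  refine chainRel_of_forall_exists fun δ hδ => ?_
  obtain ⟨ε, hε, -, hεδ, huc⟩ := exists_chain_scale hf hδ hδ
  obtain ⟨M, hM⟩ := eventually_atTop.1 ((eventually_mem_thickening_CR hf x hε).and
    (eventually_mem_thickening_CR hf y hε))
  obtain ⟨s₁, hs₁, h₁⟩ := hzw.exists_ge_dist_lt hε M
  obtain ⟨t, ht, hxy⟩ := frequently_atTop.1 (hprox ε hε) (s₁ + 1)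
  obtain ⟨s₂, hs₂, h₂⟩ := hzw.exists_ge_dist_lt hε t
  simp only [Prod.dist_eq, max_lt_iff] at h₁ h₂
  have hx : ∀ n ≥ s₁, f^[n] x ∈ thickening ε (CR f) := fun n hn => (hM n (by omega)).1
  have hy : ∀ n ≥ s₁, f^[n] y ∈ thickening ε (CR f) := fun n hn => (hM n (by omega)).2
  have hself : ∀ p : X, dist (f^[t] p) (f^[t] p) ≤ ε := fun p => by simpa using hε.le
  exact ⟨s₂ - s₁, by omega,
    exists_isChainIn_CR_switch hεδ huc ht hs₂ hx hx (hself x) hz hz h₁.1 h₂.1,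
    exists_isChainIn_CR_switch hεδ huc ht hs₂ hx hy hxy.le hz hw h₁.1 h₂.2,
    exists_isChainIn_CR_switch hεδ huc ht hs₂ hy hy (hself y) hw hw h₁.2 h₂.2,
    exists_isChainIn_CR_switch hεδ huc ht hs₂ hy hx (dist_comm (f^[t] x) _ ▸ hxy.le) hw hz h₁.2 h₂.1⟩

theorem propertyStar_of_mapClusterPt (hf : Continuous f) {q₁ q₂ z w : X} {δ₀ : ℝ}
    (hδ₀ : 0 < δ₀) (hCR : ∀ n, f^[n] q₁ ∈ CR f ∧ f^[n] q₂ ∈ CR f)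
    (hsep : ∀ n, δ₀ ≤ dist (f^[n] q₁) (f^[n] q₂))
    (hzw : MapClusterPt (z, w) atTop fun n => (f^[n] q₁, f^[n] q₂)) : PropertyStar f z w := by
  obtain ⟨hz, hw⟩ := mem_CR_of_mapClusterPt_prod hf hzw
  refine ⟨δ₀ / 2, by positivity, fun δ hδ => ?_⟩
  obtain ⟨ε, hε, hεδ₀, hεδ, huc⟩ := exists_chain_scale hf hδ (show 0 < δ₀ / 4 by positivity)
  obtain ⟨n₁, -, h₁⟩ := hzw.exists_ge_dist_lt hε 0
  obtain ⟨n₂, hn, h₂⟩ := hzw.exists_ge_dist_lt hε (n₁ + 1)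
  simp only [Prod.dist_eq, max_lt_iff] at h₁ h₂
  have hk : 0 < n₂ - n₁ := by omega
  have hend : n₁ + (n₂ - n₁) = n₂ := by omega
  obtain ⟨c, ⟨hc, hcCR, hc0, hck⟩, hco⟩ := exists_isChainIn_near hεδ huc hk
    (isChain'_iterate hε.le q₁ n₁ _) (fun i _ => self_subset_thickening hε _ (hCR _).1)
    hz hz (by simpa using h₁.1) (by simpa [hend] using h₂.1)
  obtain ⟨c', ⟨hc', hc'CR, hc'0, hc'k⟩, hc'o⟩ := exists_isChainIn_near hεδ huc hk
    (isChain'_iterate hε.le q₂ n₁ _) (fun i _ => self_subset_thickening hε _ (hCR _).2)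
    hw hw (by simpa using h₁.2) (by simpa [hend] using h₂.2)
  refine ⟨n₂ - n₁, hk, c, c', hc, hc', hcCR, hc'CR, hc0, hck, hc'0, hc'k, fun i hi => ?_⟩
  have htri := dist_triangle4 (f^[n₁ + i] q₁) (c i) (c' i) (f^[n₁ + i] q₂)
  rw [dist_comm (c' i)] at htri
  linarith [hsep (n₁ + i), hco i hi, hc'o i hi]

end ChainRelation

/-- a DC1-pair yields an omega-limit pair with the chain relation
and property*. -/
theorem dc1Pair_yields_propertyStar_pair {X : Type*} [MetricSpace X] [CompactSpace X]
    (f : X → X) (hf : Continuous f) (x y : X) (h : DC1Pair f x y) :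
    ∃ p ∈ OmegaLimit2 f x y, p.1 ∈ CR f ∧ p.2 ∈ CR f ∧
      ChainRel f p.1 p.2 ∧ PropertyStar f p.1 p.2 := by
  obtain ⟨hclose, δ₀, hδ₀, hfar⟩ := h
  have hF : Continuous (Prod.map f f) := hf.prodMap hf
  obtain ⟨p₀, hp₀, hsep⟩ := exists_mapClusterPt_forall_iterate_mem hF
    (isClosed_le continuous_const (continuous_fst.dist continuous_snd)) (q := (x, y))
    (K := {p | δ₀ ≤ dist p.1 p.2}) fun L M => by
      obtain ⟨a, ha, hrun⟩ := exists_run_of_upperDensity_eq_one hfar L M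
      exact ⟨a, ha, fun j hj => by simpa using (hrun j hj).le⟩
  obtain ⟨p, -, hp⟩ := isCompact_univ.exists_mapClusterPt (f := atTop)
    (u := fun n => (Prod.map f f)^[n] p₀) (by simp)
  have hpxy := hp₀.of_orbit_of_orbit hF hp
  have hp₀CR := fun n => hp₀.iterate_of_orbit hF n
  simp only [Prod.map_iterate] at hpxy hp hsep hp₀CR
  obtain ⟨hz, hw⟩ := mem_CR_of_mapClusterPt_prod hf hpxy
  have hprox (ε : ℝ) (hε : 0 < ε) := frequently_of_upperDensity_eq_one (hclose ε hε)
  exact ⟨p, hpxy.tendsto_subseq, hz, hw, chainRel_of_mapClusterPt hf hprox hpxy,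
    propertyStar_of_mapClusterPt hf hδ₀ (fun n => mem_CR_of_mapClusterPt_prod hf (hp₀CR n))
      hsep hp⟩
end

section
/- Let X be a compact metric space and f : X → X a continuous map. Suppose: (1) there exists (z, w) ∈ CR(f)² satisfying z ~ w (chain relation) and property*; and (2) for every sequence (x_i)_{i≥0} of points in CR(f) with lim_{i→∞} d(f(x_i), x_{i+1}) = 0, there exists x ∈ X with lim_{n→∞} (1/n)·Σ_{i=0}^{n−1} d(fⁱ(x), x_i) = 0. Then f exhibits distributional chaos of type 1: there exists an uncountable set S ⊆ X such that every pair of distinct points of S is a DC1-pair for f. -/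
open Metric Filter Set
open scoped Classical

/-!
Property* and the chain relation give, at every scale `δ`, two `r`-separated `δ`-cycles in `CR f`
through `z` and `w`, and `δ`-chains in `CR f` of one common length switching between `z` and `w`.
A binary sequence `a` is turned into an asymptotic pseudo-orbit in `CR f`: its `j`-th block
switches from the cycle chosen by `a j` to the one chosen by `a (j + 1)` and then runs the latter
for so long that this final window makes up almost all of the orbit up to the end of the block.
The average shadowing hypothesis gives a point `p a` for each `a`. By Markov's inequality, the
orbits of `p a` and `p b` stay close to the pseudo-orbits outside a set of density zero, so they
are close on most of the windows where `a` and `b` agree and `r`-apart on most of those where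
they differ: `p a`, `p b` is a DC1-pair as soon as `a` and `b` agree and differ infinitely often.
Indicator sequences of the sets of odd codes of the prefixes of `a : ℕ → Bool` do so for `a ≠ b`,
since they vanish at even places and two distinct sequences share no long prefixes.
-/

open scoped Finset Topology

noncomputable def frequency (P : ℕ → Prop) [DecidablePred P] (n : ℕ) : ℝ :=
  (#{i ∈ Finset.range n | P i} : ℝ) / n

section Frequency

variable {P : ℕ → Prop} [DecidablePred P]

theorem frequency_nonneg (n : ℕ) : 0 ≤ frequency P n := by
  unfold frequency
  positivity

theorem frequency_le_one (n : ℕ) : frequency P n ≤ 1 := by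
  refine div_le_one_of_le₀ ?_ n.cast_nonneg
  exact_mod_cast (Finset.card_filter_le _ _).trans (Finset.card_range n).le

theorem limsup_frequency_eq_one (h : ∀ η > 0, ∃ᶠ n in atTop, 1 - η ≤ frequency P n) :
    limsup (frequency P) atTop = 1 := by
  have hbdd : IsBoundedUnder (· ≤ ·) atTop (frequency P) :=
    isBoundedUnder_of ⟨1, frequency_le_one⟩
  refine le_antisymm (limsup_le_of_le (isCoboundedUnder_le_of_le _ frequency_nonneg)
    (Eventually.of_forall frequency_le_one)) (le_of_forall_pos_le_add fun η hη => ?_)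
  linarith [le_limsup_of_frequently_le (h η hη) hbdd]

/-- Markov's inequality for Cesàro means. -/
theorem tendsto_frequency_of_tendsto_cesaro {e : ℕ → ℝ} (he : ∀ i, 0 ≤ e i)
    (h : Tendsto (fun n : ℕ => (∑ i ∈ Finset.range n, e i) / n) atTop (𝓝 0))
    {ε : ℝ} (hε : 0 < ε) :
    Tendsto (frequency fun i => ε ≤ e i) atTop (𝓝 0) := by
  refine squeeze_zero (fun _ => frequency_nonneg _) (fun n => ?_)
    (by simpa using h.const_mul ε⁻¹)
  have hcard : (#{i ∈ Finset.range n | ε ≤ e i} : ℝ) * ε ≤ ∑ i ∈ Finset.range n, e i :=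
    calc (#{i ∈ Finset.range n | ε ≤ e i} : ℝ) * ε
        ≤ ∑ i ∈ Finset.range n with ε ≤ e i, e i := by
          simpa using Finset.card_nsmul_le_sum _ e ε fun i hi => (Finset.mem_filter.1 hi).2
      _ ≤ ∑ i ∈ Finset.range n, e i :=
          Finset.sum_le_sum_of_subset_of_nonneg (Finset.filter_subset _ _) fun i _ _ => he i
  rw [frequency, mul_div_assoc']
  gcongr
  rwa [le_inv_mul_iff₀ hε, mul_comm]

theorem limsup_frequency_eq_one_of_windows {Bad : ℕ → Prop} [DecidablePred Bad]
    (hBad : Tendsto (frequency Bad) atTop (𝓝 0))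
    (hwin : ∀ N : ℕ, ∃ m n, N ≤ n ∧ N * m ≤ n ∧ ∀ i, m ≤ i → i < n → ¬ Bad i → P i) :
    limsup (frequency P) atTop = 1 := by
  refine limsup_frequency_eq_one fun η hη => frequently_atTop.2 fun n₀ => ?_
  obtain ⟨N₀, hN₀⟩ := eventually_atTop.1 (hBad.eventually (gt_mem_nhds (half_pos hη)))
  obtain ⟨K, hK⟩ := exists_nat_gt (2 / η)
  obtain ⟨m, n, hn, hmn, hPi⟩ := hwin (max (max n₀ N₀) (K + 1))
  refine ⟨n, (le_max_left _ _).trans ((le_max_left _ _).trans hn), ?_⟩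
  have hcover : Finset.Ico m n ⊆ {i ∈ Finset.range n | P i} ∪ {i ∈ Finset.range n | Bad i} := by
    intro i hi
    rw [Finset.mem_Ico] at hi
    by_cases hb : Bad i <;> simp [hi.2, hb, hPi i hi.1 hi.2]
  have hcount :
      ((n - m : ℕ) : ℝ) ≤ #{i ∈ Finset.range n | P i} + #{i ∈ Finset.range n | Bad i} := by
    rw [← Nat.card_Ico]
    exact_mod_cast (Finset.card_le_card hcover).trans (Finset.card_union_le _ _)
  have hm : (K + 1 : ℝ) * m ≤ n := by
    exact_mod_cast (Nat.mul_le_mul_right m (le_max_right _ _)).trans hmn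
  have hmn' : m ≤ n := (Nat.le_mul_of_pos_left m (by omega)).trans hmn
  have hn0 : (0 : ℝ) < n := by exact_mod_cast (show 0 < n by omega)
  have hbad : (#{i ∈ Finset.range n | Bad i} : ℝ) < η / 2 * n :=
    (div_lt_iff₀ hn0).1 (hN₀ n ((le_max_right _ _).trans ((le_max_left _ _).trans hn)))
  have hηK : 2 < η * (K + 1) := by
    rw [div_lt_iff₀ hη] at hK
    linarith
  rw [frequency, le_div_iff₀ hn0]
  push_cast [hmn'] at hcount
  nlinarith

end Frequency

/-- Odd, so that all indicator sequences below vanish at even places. -/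
def prefixCode (a : ℕ → Bool) (n : ℕ) : ℕ := 2 * Encodable.encode ((List.range n).map a) + 1

noncomputable def prefixCodeIndicator (a : ℕ → Bool) (m : ℕ) : Bool :=
  decide (m ∈ range (prefixCode a))

section PrefixCode

variable {a b : ℕ → Bool}

theorem prefixCode_eq_iff {n n' : ℕ} :
    prefixCode a n = prefixCode b n' ↔ (List.range n).map a = (List.range n').map b := by
  simp [prefixCode, Encodable.encode_inj]

theorem prefixCode_injective (a : ℕ → Bool) : Function.Injective (prefixCode a) := fun n n' h => by
  simpa using congrArg List.length (prefixCode_eq_iff.1 h)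

theorem prefixCode_ne_of_lt {n₀ n : ℕ} (hab : a n₀ ≠ b n₀) (hn : n₀ < n) (n' : ℕ) :
    prefixCode a n ≠ prefixCode b n' := by
  intro h
  have hmap := prefixCode_eq_iff.1 h
  obtain rfl : n = n' := by simpa using congrArg List.length hmap
  exact hab (List.map_inj_left.1 hmap n₀ (List.mem_range.2 hn))

theorem frequently_prefixCodeIndicator_eq :
    ∃ᶠ j in atTop, prefixCodeIndicator a (j + 1) = prefixCodeIndicator b (j + 1) := by
  refine frequently_atTop.2 fun N => ⟨2 * N + 1, by omega, ?_⟩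
  have hnot : ∀ c, 2 * N + 1 + 1 ∉ range (prefixCode c) := by
    rintro c ⟨n, hn⟩
    simp only [prefixCode] at hn
    omega
  simp [prefixCodeIndicator, hnot]

theorem frequently_prefixCodeIndicator_ne (hab : a ≠ b) :
    ∃ᶠ j in atTop, prefixCodeIndicator a (j + 1) ≠ prefixCodeIndicator b (j + 1) := by
  obtain ⟨n₀, hn₀⟩ := Function.ne_iff.1 hab
  have hinf : (range fun n => prefixCode a (n₀ + 1 + n)).Infinite :=
    infinite_range_of_injective ((prefixCode_injective a).comp (add_right_injective _))
  refine frequently_atTop.2 fun N => ?_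
  obtain ⟨_, ⟨n, rfl⟩, hN⟩ := hinf.exists_gt N
  refine ⟨2 * Encodable.encode ((List.range (n₀ + 1 + n)).map a), ?_, ?_⟩
  · simp only [prefixCode] at hN
    omega
  · have hb : prefixCode a (n₀ + 1 + n) ∉ range (prefixCode b) := by
      rintro ⟨n', hn'⟩
      exact prefixCode_ne_of_lt hn₀ (by omega) n' hn'.symm
    simpa [prefixCodeIndicator, prefixCode] using hb

end PrefixCode

theorem IsChain'.dist_mod_le {X : Type*} [MetricSpace X] {f : X → X} {δ : ℝ} {c : ℕ → X}
    {k : ℕ} (hk : 0 < k) (hc : IsChain' f δ c k) (hck : c k = c 0) (i : ℕ) :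
    dist (f (c (i % k))) (c ((i + 1) % k)) ≤ δ := by
  have hi : i % k < k := Nat.mod_lt _ hk
  rw [← Nat.mod_add_mod]
  rcases (show i % k + 1 ≤ k from hi).lt_or_eq with hlt | heq
  · rw [Nat.mod_eq_of_lt hlt]
    exact hc _ hi
  · rw [heq, Nat.mod_self]
    have := hc _ hi
    rwa [heq, hck] at this

section Blocks

variable {X : Type*} {s : ℕ → ℕ}

def blockIndex (s : ℕ → ℕ) (i : ℕ) : ℕ := Nat.findGreatest (fun j => s j ≤ i) i

theorem blockIndex_eq (hs : StrictMono s) {i j : ℕ} (h₁ : s j ≤ i) (h₂ : i < s (j + 1)) :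
    blockIndex s i = j := by
  have hj : j ≤ i := (hs.id_le j).trans h₁
  refine le_antisymm (not_lt.1 fun hlt => ?_) (Nat.le_findGreatest hj h₁)
  have := Nat.findGreatest_spec (P := fun j => s j ≤ i) hj h₁
  exact absurd ((hs.monotone hlt).trans this) (not_le.2 h₂)

theorem blockIndex_mem_Ico (hs : StrictMono s) (hs₀ : s 0 = 0) (i : ℕ) :
    s (blockIndex s i) ≤ i ∧ i < s (blockIndex s i + 1) := by
  have hle : s (blockIndex s i) ≤ i :=
    Nat.findGreatest_spec (P := fun j => s j ≤ i) (Nat.zero_le i) (by simp [hs₀])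
  refine ⟨hle, not_le.1 fun h => ?_⟩
  exact Nat.lt_irrefl _
    (Nat.le_findGreatest (P := fun j => s j ≤ i) ((hs.id_le _).trans h) h :
      blockIndex s i + 1 ≤ blockIndex s i)

theorem tendsto_blockIndex (hs : StrictMono s) : Tendsto (blockIndex s) atTop atTop :=
  tendsto_atTop.2 fun J => (eventually_ge_atTop (s J)).mono fun _ hi =>
    Nat.le_findGreatest ((hs.id_le J).trans hi) hi

def concatBlocks (s : ℕ → ℕ) (B : ℕ → ℕ → X) (i : ℕ) : X :=
  B (blockIndex s i) (i - s (blockIndex s i))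

theorem concatBlocks_eq (hs : StrictMono s) (B : ℕ → ℕ → X) {i j : ℕ} (h₁ : s j ≤ i)
    (h₂ : i < s (j + 1)) : concatBlocks s B i = B j (i - s j) := by
  rw [concatBlocks, blockIndex_eq hs h₁ h₂]

theorem dist_concatBlocks_succ_le [MetricSpace X] {f : X → X} (hs : StrictMono s)
    (hs₀ : s 0 = 0) {B : ℕ → ℕ → X} {δ : ℕ → ℝ} (hB : ∀ j t, dist (f (B j t)) (B j (t + 1)) ≤ δ j)
    (hjoin : ∀ j, B j (s (j + 1) - s j) = B (j + 1) 0) (i : ℕ) :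
    dist (f (concatBlocks s B i)) (concatBlocks s B (i + 1)) ≤ δ (blockIndex s i) := by
  obtain ⟨h₁, h₂⟩ := blockIndex_mem_Ico hs hs₀ i
  generalize blockIndex s i = j at h₁ h₂ ⊢
  have hnext : concatBlocks s B (i + 1) = B j (i - s j + 1) := by
    rcases (show i + 1 ≤ s (j + 1) from h₂).lt_or_eq with hlt | heq
    · rw [concatBlocks_eq hs B (by omega) hlt]
      congr 1
      omega
    · rw [concatBlocks_eq hs B heq.ge (heq ▸ hs (Nat.lt_succ_self _)), heq, Nat.sub_self,
        ← hjoin]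
      congr 1
      omega
  rw [concatBlocks_eq hs B h₁ h₂, hnext]
  exact hB j _

end Blocks

section

variable {X : Type*} [MetricSpace X]

/-- The symbol `false` stands for `z` and `true` for `w`. -/
structure SeparatedCycles (f : X → X) (z w : X) (r δ : ℝ) where
  period : ℕ
  period_pos : 0 < period
  cycle : Bool → ℕ → X
  periodic : ∀ b, Function.Periodic (cycle b) period
  cycle_zero : ∀ b, cycle b 0 = cond b w z
  dist_cycle_succ_le : ∀ b i, dist (f (cycle b i)) (cycle b (i + 1)) ≤ δ
  cycle_mem_CR : ∀ b i, cycle b i ∈ CR f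
  lt_dist_cycle : ∀ i, r < dist (cycle false i) (cycle true i)
  switchLength : ℕ
  switchLength_pos : 0 < switchLength
  switch : Bool → Bool → ℕ → X
  switch_chain : ∀ b b', IsChain' f δ (switch b b') switchLength
  switch_mem_CR : ∀ b b' i, i ≤ switchLength → switch b b' i ∈ CR f
  switch_zero : ∀ b b', switch b b' 0 = cond b w z
  switch_end : ∀ b b', switch b b' switchLength = cond b' w z

variable {f : X → X} {z w : X}

theorem SeparatedCycles.lt_dist_cycle_of_ne {r δ : ℝ} (C : SeparatedCycles f z w r δ)
    {b b' : Bool} (h : b ≠ b') (i : ℕ) : r < dist (C.cycle b i) (C.cycle b' i) := by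
  cases b <;> cases b' <;> simp only [ne_eq, not_true_eq_false] at h
  · exact C.lt_dist_cycle i
  · exact dist_comm (C.cycle false i) _ ▸ C.lt_dist_cycle i

theorem exists_separatedCycles (hrel : ChainRel f z w) (hstar : PropertyStar f z w) :
    ∃ r > 0, ∀ δ > 0, Nonempty (SeparatedCycles f z w r δ) := by
  obtain ⟨r, hr, hcyc⟩ := hstar
  refine ⟨r, hr, fun δ hδ => ?_⟩
  obtain ⟨k, hk, c₀, c₁, hc₀, hc₁, hc₀CR, hc₁CR, hc₀0, hc₀k, hc₁0, hc₁k, hsep⟩ := hcyc δ hδ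
  obtain ⟨m, hm, N, hN, hchain⟩ := hrel δ hδ
  -- switches of length `m * (N * k)`, a multiple of `k`, so that the cycles themselves serve
  -- as switches from a point to itself
  obtain ⟨⟨t₀₁, ht₀₁, ht₀₁CR, ht₀₁0, ht₀₁T⟩, ⟨t₁₀, ht₁₀, ht₁₀CR, ht₁₀0, ht₁₀T⟩⟩ :=
    hchain (N * k) (Nat.le_mul_of_pos_right N hk)
  let cycle : Bool → ℕ → X := fun b i => cond b c₁ c₀ (i % k)
  have hper : ∀ b, Function.Periodic (cycle b) k := fun b i => by simp [cycle]
  have hzero : ∀ b, cycle b 0 = cond b w z := by rintro (_ | _) <;> simp [cycle, *]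
  have hstep : ∀ b i, dist (f (cycle b i)) (cycle b (i + 1)) ≤ δ := by
    rintro (_ | _) i
    · exact hc₀.dist_mod_le hk (hc₀k.trans hc₀0.symm) i
    · exact hc₁.dist_mod_le hk (hc₁k.trans hc₁0.symm) i
  have hCR : ∀ b i, cycle b i ∈ CR f := by
    rintro (_ | _) i
    · exact hc₀CR _ (Nat.mod_lt _ hk).le
    · exact hc₁CR _ (Nat.mod_lt _ hk).le
  refine ⟨{ period := k, period_pos := hk, cycle := cycle, periodic := hper, cycle_zero := hzero
            dist_cycle_succ_le := hstep, cycle_mem_CR := hCR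
            lt_dist_cycle := fun i => hsep _ (Nat.mod_lt _ hk).le
            switchLength := m * (N * k)
            switchLength_pos := by positivity
            switch := fun b b' => if b = b' then cycle b else cond b' t₀₁ t₁₀
            switch_chain := ?_, switch_mem_CR := ?_, switch_zero := ?_, switch_end := ?_ }⟩
  · rintro (_ | _) (_ | _) i _ <;> simp [ht₀₁ i, ht₁₀ i, *]
  · rintro (_ | _) (_ | _) i hi <;> simp [hCR, ht₀₁CR i hi, ht₁₀CR i hi]
  · rintro (_ | _) (_ | _) <;> simp [hzero, ht₀₁0, ht₁₀0]
  · have hT : ∀ b, cycle b (m * (N * k)) = cond b w z := fun b => by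
      simpa [cycle, ← mul_assoc] using hzero b
    rintro (_ | _) (_ | _) <;> simp [hT, ht₀₁T, ht₁₀T]

end

namespace SeparatedCycles

variable {X : Type*} [MetricSpace X] {f : X → X} {z w : X} {r : ℝ} {δ : ℕ → ℝ}
  (D : ∀ j, SeparatedCycles f z w r (δ j))

/-- The factor `1 + period * (j + 1)` makes the window `[windowStart D j, blockStart D (j + 1))`
a multiple of the period and all but a fraction `1 / (j + 2)` of `[0, blockStart D (j + 1))`. -/
def blockStart : ℕ → ℕ
  | 0 => 0
  | j + 1 => (blockStart j + (D j).switchLength) * (1 + (D j).period * (j + 1))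

def windowStart (j : ℕ) : ℕ := blockStart D j + (D j).switchLength

theorem blockStart_succ (j : ℕ) :
    blockStart D (j + 1) = windowStart D j * (1 + (D j).period * (j + 1)) := rfl

theorem windowStart_lt_blockStart_succ (j : ℕ) : windowStart D j < blockStart D (j + 1) := by
  have hW : 0 < windowStart D j := Nat.add_pos_right _ (D j).switchLength_pos
  rw [blockStart_succ]
  exact lt_mul_of_one_lt_right hW
    (Nat.lt_add_of_pos_right (Nat.mul_pos (D j).period_pos j.succ_pos))

theorem blockStart_strictMono : StrictMono (blockStart D) :=
  strictMono_nat_of_lt_succ fun j =>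
    (Nat.lt_add_of_pos_right (D j).switchLength_pos).trans (windowStart_lt_blockStart_succ D j)

theorem mul_windowStart_le (j : ℕ) : (j + 2) * windowStart D j ≤ blockStart D (j + 1) := by
  rw [blockStart_succ, mul_comm]
  have := Nat.le_mul_of_pos_left (j + 1) (D j).period_pos
  exact Nat.mul_le_mul_left _ (by omega)

def block (a : ℕ → Bool) (j t : ℕ) : X :=
  if t < (D j).switchLength then (D j).switch (a j) (a (j + 1)) t
  else (D j).cycle (a (j + 1)) (t - (D j).switchLength)

def orbit (a : ℕ → Bool) : ℕ → X := concatBlocks (blockStart D) (block D a)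

variable {D}

theorem dist_block_succ_le (a : ℕ → Bool) (j t : ℕ) :
    dist (f (block D a j t)) (block D a j (t + 1)) ≤ δ j := by
  simp only [block]
  rcases lt_trichotomy (t + 1) (D j).switchLength with h | h | h
  · rw [if_pos (by omega), if_pos h]
    exact (D j).switch_chain _ _ t (by omega)
  · rw [if_pos (by omega), if_neg (by omega), h, Nat.sub_self, (D j).cycle_zero,
      ← (D j).switch_end (a j), ← h]
    exact (D j).switch_chain _ _ t (by omega)
  · rw [if_neg (by omega), if_neg (by omega), show t + 1 - (D j).switchLength =
      t - (D j).switchLength + 1 by omega]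
    exact (D j).dist_cycle_succ_le _ _

theorem block_end (a : ℕ → Bool) (j : ℕ) :
    block D a j (blockStart D (j + 1) - blockStart D j) = block D a (j + 1) 0 := by
  have hlen : blockStart D (j + 1) - blockStart D j - (D j).switchLength =
      (windowStart D j * (j + 1)) * (D j).period := by
    rw [Nat.sub_sub, blockStart_succ, ← windowStart, mul_add, mul_one, Nat.add_sub_cancel_left]
    ring
  have hper := ((D j).periodic (a (j + 1))).nat_mul_eq (windowStart D j * (j + 1))
  rw [Nat.cast_id] at hper
  have hT := (windowStart_lt_blockStart_succ D j).le
  rw [block, block, if_neg (by rw [windowStart] at hT; omega), hlen, hper, (D j).cycle_zero,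
    if_pos (D (j + 1)).switchLength_pos, (D (j + 1)).switch_zero]

theorem orbit_mem_CR (a : ℕ → Bool) (i : ℕ) : orbit D a i ∈ CR f := by
  simp only [orbit, concatBlocks, block]
  split_ifs with h
  · exact (D _).switch_mem_CR _ _ _ h.le
  · exact (D _).cycle_mem_CR _ _

theorem orbit_eq_cycle (a : ℕ → Bool) {i j : ℕ} (h₁ : windowStart D j ≤ i)
    (h₂ : i < blockStart D (j + 1)) :
    orbit D a i = (D j).cycle (a (j + 1)) (i - windowStart D j) := by
  rw [windowStart] at h₁ ⊢
  rw [orbit, concatBlocks_eq (blockStart_strictMono D) _ (by omega) h₂, block, if_neg (by omega),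
    Nat.sub_sub]

theorem tendsto_dist_orbit (hδ : Tendsto δ atTop (𝓝 0)) (a : ℕ → Bool) :
    Tendsto (fun i => dist (f (orbit D a i)) (orbit D a (i + 1))) atTop (𝓝 0) :=
  squeeze_zero (fun _ => dist_nonneg)
    (dist_concatBlocks_succ_le (blockStart_strictMono D) rfl (dist_block_succ_le a) (block_end a))
    (hδ.comp (tendsto_blockIndex (blockStart_strictMono D)))

end SeparatedCycles

namespace SeparatedCycles

variable {X : Type*} [MetricSpace X] {f : X → X} {z w : X} {r : ℝ} {δ : ℕ → ℝ}
  {D : ∀ j, SeparatedCycles f z w r (δ j)}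

theorem limsup_frequency_eq_one_of_frequently_windows {e : ℕ → ℝ} (he : ∀ i, 0 ≤ e i)
    (hcesaro : Tendsto (fun n : ℕ => (∑ i ∈ Finset.range n, e i) / n) atTop (𝓝 0))
    {ε : ℝ} (hε : 0 < ε) {J : ℕ → Prop} (hJ : ∃ᶠ j in atTop, J j)
    {Q : ℕ → Prop} [DecidablePred Q]
    (hQ : ∀ j, J j → ∀ i, windowStart D j ≤ i → i < blockStart D (j + 1) → e i < ε → Q i) :
    limsup (frequency Q) atTop = 1 := by
  refine limsup_frequency_eq_one_of_windows (tendsto_frequency_of_tendsto_cesaro he hcesaro hε)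
    fun N => ?_
  obtain ⟨j, hjN, hj⟩ := frequently_atTop.1 hJ N
  refine ⟨windowStart D j, blockStart D (j + 1),
    hjN.trans ((Nat.le_succ j).trans ((blockStart_strictMono D).id_le _)),
    (Nat.mul_le_mul_right _ (by omega)).trans (mul_windowStart_le D j),
    fun i h₁ h₂ hi => hQ j hj i h₁ h₂ (not_le.1 hi)⟩

theorem dc1Pair_of_tendsto_cesaro (hr : 0 < r) {a b : ℕ → Bool} {p q : X}
    (hp : Tendsto (fun n : ℕ => (∑ i ∈ Finset.range n, dist (f^[i] p) (orbit D a i)) / n)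
      atTop (𝓝 0))
    (hq : Tendsto (fun n : ℕ => (∑ i ∈ Finset.range n, dist (f^[i] q) (orbit D b i)) / n)
      atTop (𝓝 0))
    (heq : ∃ᶠ j in atTop, a (j + 1) = b (j + 1)) (hne : ∃ᶠ j in atTop, a (j + 1) ≠ b (j + 1)) :
    DC1Pair f p q := by
  set e := fun i => dist (f^[i] p) (orbit D a i) + dist (f^[i] q) (orbit D b i)
  have he : ∀ i, 0 ≤ e i := fun i => by positivity
  have hcesaro : Tendsto (fun n : ℕ => (∑ i ∈ Finset.range n, e i) / n) atTop (𝓝 0) := by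
    simpa [e, Finset.sum_add_distrib, add_div] using hp.add hq
  refine ⟨fun ε hε => ?_, r / 2, half_pos hr, ?_⟩
  · refine limsup_frequency_eq_one_of_frequently_windows (D := D) he hcesaro hε heq
      fun j hj i h₁ h₂ hi => ?_
    have hpq : orbit D a i = orbit D b i := by
      rw [orbit_eq_cycle a h₁ h₂, orbit_eq_cycle b h₁ h₂, hj]
    calc dist (f^[i] p) (f^[i] q)
        ≤ dist (f^[i] p) (orbit D a i) + dist (orbit D a i) (f^[i] q) := dist_triangle _ _ _
      _ = e i := by simp only [e]; rw [dist_comm (orbit D a i), hpq]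
      _ < ε := hi
  · refine limsup_frequency_eq_one_of_frequently_windows (D := D) he hcesaro (half_pos hr) hne
      fun j hj i h₁ h₂ hi => ?_
    have hsep : r < dist (orbit D a i) (orbit D b i) := by
      rw [orbit_eq_cycle a h₁ h₂, orbit_eq_cycle b h₁ h₂]
      exact (D j).lt_dist_cycle_of_ne hj _
    have := dist_triangle4 (orbit D a i) (f^[i] p) (f^[i] q) (orbit D b i)
    rw [dist_comm (orbit D a i) (f^[i] p)] at this
    change r / 2 < _
    linarith [show e i < r / 2 from hi]

end SeparatedCycles

theorem not_dc1Pair_self {X : Type*} [MetricSpace X] (f : X → X) (x : X) : ¬ DC1Pair f x x := by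
  rintro ⟨-, δ₀, hδ₀, h⟩
  simp [not_lt.2 hδ₀.le] at h

theorem not_countable_range_of_injective {α β : Type*} [Uncountable α] {g : α → β}
    (hg : Function.Injective g) : ¬ (range g).Countable := fun h =>
  not_countable (α := α) (countable_univ_iff.1
    ((mapsTo_univ_iff.2 mem_range_self).countable_of_injOn hg.injOn h))

instance : Uncountable (ℕ → Bool) := by
  rw [← Cardinal.aleph0_lt_mk_iff]
  simpa using Cardinal.cantor Cardinal.aleph0

theorem dc1_sufficient_condition_general {X : Type*} [MetricSpace X]
    (f : X → X)
    (h1 : ∃ z w : X, z ∈ CR f ∧ w ∈ CR f ∧ ChainRel f z w ∧ PropertyStar f z w)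
    (h2 : ∀ x : ℕ → X, (∀ i, x i ∈ CR f) →
      Tendsto (fun i => dist (f (x i)) (x (i + 1))) atTop (nhds 0) →
      ∃ p : X, Tendsto (fun n : ℕ =>
        (∑ i ∈ Finset.range n, dist (f^[i] p) (x i)) / n) atTop (nhds 0)) :
    ExhibitsDC1 f := by
  obtain ⟨z, w, -, -, hrel, hstar⟩ := h1
  obtain ⟨r, hr, hD⟩ := exists_separatedCycles hrel hstar
  let D (j : ℕ) : SeparatedCycles f z w r (1 / ((j : ℝ) + 1)) :=
    (hD _ Nat.one_div_pos_of_nat).some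
  choose p hp using fun a : ℕ → Bool =>
    h2 _ (SeparatedCycles.orbit_mem_CR (D := D) (prefixCodeIndicator a))
      (SeparatedCycles.tendsto_dist_orbit tendsto_one_div_add_atTop_nhds_zero_nat _)
  have hdc1 : ∀ a b, a ≠ b → DC1Pair f (p a) (p b) := fun a b hab =>
    SeparatedCycles.dc1Pair_of_tendsto_cesaro hr (hp a) (hp b)
      frequently_prefixCodeIndicator_eq (frequently_prefixCodeIndicator_ne hab)
  have hinj : Function.Injective p := fun a b hpab =>
    by_contra fun hab => not_dc1Pair_self f (p b) (hpab ▸ hdc1 a b hab)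
  refine ⟨range p, not_countable_range_of_injective hinj, ?_⟩
  rintro _ ⟨a, rfl⟩ _ ⟨b, rfl⟩ hab
  exact hdc1 a b (ne_of_apply_ne p hab)

/-- sufficient condition for DC1 (Lemma 4.1). -/
theorem dc1_sufficient_condition {X : Type*} [MetricSpace X] [CompactSpace X]
    (f : X → X) (hf : Continuous f)
    (h1 : ∃ z w : X, z ∈ CR f ∧ w ∈ CR f ∧ ChainRel f z w ∧ PropertyStar f z w)
    (h2 : ∀ x : ℕ → X, (∀ i, x i ∈ CR f) →
      Tendsto (fun i => dist (f (x i)) (x (i + 1))) atTop (nhds 0) →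
      ∃ p : X, Tendsto (fun n : ℕ =>
        (∑ i ∈ Finset.range n, dist (f^[i] p) (x i)) / n) atTop (nhds 0)) :
    ExhibitsDC1 f :=
  dc1_sufficient_condition_general f h1 h2
end
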